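/- Let P be a definite program and let x and y be distinct atoms of P such that the clause x ← y (i.e., (x, {y}, ∅)) belongs to P and at least one of the clauses x ← not(y) (i.e., (x, ∅, {y})) and y ← not(x) (i.e., (y, ∅, {x})) belongs to P. Then every stable model of P contains x. -/
import Mathlib


/-- A clause of a propositional logic program: an optional head (a definite
clause if `head = some h`, a constraint if `head = none`), a positive body
and a negative body. -/
structure LPClause (α : Type) where
  head : Option α
  pos : Finset α
  neg : Finset α
deriving DecidableEq

/-- A program is a finite set of clauses. -/
abbrev LPProgram (α : Type) := Finset (LPClause α)

/-- The atoms occurring in a clause. -/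
def LPClause.atoms {α : Type} [DecidableEq α] (c : LPClause α) : Finset α :=
  c.head.toFinset ∪ c.pos ∪ c.neg

/-- The atoms occurring in a program. -/
def LPProgram.atoms {α : Type} [DecidableEq α] (P : LPProgram α) : Finset α :=
  P.sup LPClause.atoms

/-- `N` is closed under the Horn rules of the reduct `P^M`: for every definite
clause of `P` whose negative body is disjoint from `M`, if its positive body
is contained in `N` then so is its head. -/
def ClosedUnder {α : Type} (P : LPProgram α) (M : Finset α) (N : Set α) : Prop :=
  ∀ c ∈ P, ∀ h : α, c.head = some h → (∀ b ∈ c.neg, b ∉ M) →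
    (↑c.pos : Set α) ⊆ N → h ∈ N

/-- `M` is a stable model of `P`: `M` is the least set closed under the rules
of the reduct `P^M` (i.e. `M = lm(P^M)`), and `M` satisfies every constraint
of `P`. -/
def IsStable {α : Type} (P : LPProgram α) (M : Finset α) : Prop :=
  ClosedUnder P M ↑M ∧ (∀ N : Set α, ClosedUnder P M N → ↑M ⊆ N) ∧
  ∀ c ∈ P, c.head = none → ¬(c.pos ⊆ M ∧ ∀ b ∈ c.neg, b ∉ M)

/-- If a definite program `P` contains the clause `x ← y` and at least one of
the clauses `x ← not(y)` and `y ← not(x)`, where `x ≠ y`, then every stable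
model of `P` contains `x`. -/
theorem stmt_4 {α : Type} (P : LPProgram α) (x y : α) (hxy : x ≠ y)
    (hdef : ∀ c ∈ P, c.head ≠ none)
    (h₁ : (⟨some x, {y}, ∅⟩ : LPClause α) ∈ P)
    (h₂ : (⟨some x, ∅, {y}⟩ : LPClause α) ∈ P ∨ (⟨some y, ∅, {x}⟩ : LPClause α) ∈ P)
    (M : Finset α) (hM : IsStable P M) : x ∈ M := by
  obtain ⟨hcl, -, -⟩ := hM
  have hxy' : y ∈ M → x ∈ M := fun hy =>
    hcl _ h₁ x rfl (by simp) (by simpa using hy)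
  rcases h₂ with h | h
  · by_cases hy : y ∈ M
    · exact hxy' hy
    · exact hcl _ h x rfl (by simpa using hy) (by simp)
  · by_cases hx : x ∈ M
    · exact hx
    · exact hxy' (hcl _ h y rfl (by simpa using hx) (by simp))
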